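/- Let d ≥ 1, let P be a finite set of points in ℝ^d, and let k be an integer with 2 ≤ k ≤ |P|. For v ∈ ℝ^d and S ⊆ P define σ(v,S) = Σ_{s∈S} ‖s−v‖_∞ (the sum of shell numbers of the points of S around center v). Suppose v* ∈ P and S* ⊆ P with |S*| = k together minimize σ(v,S) over all choices of v ∈ P and S ⊆ P with |S| = k. Then w(S*) ≤ (2 − 2/k)·d·OPT, where OPT = min{ w(T) : T ⊆ P, |T| = k }. (This is the approximation guarantee of algorithm MC1x1 on d-dimensional meshes.) -/

import Mathlib

open Finset

/-! Every coordinate of `p - q` is at most `‖p - v‖ + ‖q - v‖`, so summing over the pairs of a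
`k`-set `S` gives `w S ≤ (k - 1) · d · σ(v, S)` for any center `v`. Conversely, averaging
`σ(v, T)` over the centers `v ∈ T` of an optimal `k`-set `T` and using `‖·‖∞ ≤ ‖·‖₁` produces a
center with `k · σ(v, T) ≤ 2 · OPT`. Minimality of `(v*, S*)` chains the two bounds. -/

/-- The L1 (Manhattan) distance between two points of `ℝ^d`. -/
noncomputable def dist1 {d : ℕ} (p q : Fin d → ℝ) : ℝ := ∑ i, |p i - q i|

/-- The sum of L1 distances over all unordered pairs of distinct points of `S`. -/
noncomputable def w {d : ℕ} (S : Finset (Fin d → ℝ)) : ℝ :=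
  (∑ p ∈ S, ∑ q ∈ S, dist1 p q) / 2

/-- The sum of shell numbers of the points of `S` around center `v`: the shell number of
`s` is its L∞ distance `‖s − v‖` to `v` (the Pi norm on `Fin d → ℝ` is the sup norm). -/
noncomputable def shellSum {d : ℕ} (v : Fin d → ℝ) (S : Finset (Fin d → ℝ)) : ℝ :=
  ∑ s ∈ S, ‖s - v‖

section

variable {d : ℕ}

lemma dist1_self (p : Fin d → ℝ) : dist1 p p = 0 := by
  simp [dist1]

lemma norm_sub_le_dist1 (p q : Fin d → ℝ) : ‖p - q‖ ≤ dist1 p q :=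
  (pi_norm_le_iff_of_nonneg (sum_nonneg fun _ _ => abs_nonneg _)).2 fun i =>
    single_le_sum (f := fun j => |p j - q j|) (fun _ _ => abs_nonneg _) (mem_univ i)

lemma dist1_le_mul_add_norm (p q v : Fin d → ℝ) :
    dist1 p q ≤ d * (‖p - v‖ + ‖q - v‖) := by
  calc dist1 p q = ∑ i, ‖(p - v) i - (q - v) i‖ := by simp [dist1, Real.norm_eq_abs]
    _ ≤ ∑ _i : Fin d, (‖p - v‖ + ‖q - v‖) := sum_le_sum fun i _ =>
        (norm_sub_le _ _).trans (add_le_add (norm_le_pi_norm _ i) (norm_le_pi_norm _ i))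
    _ = d * (‖p - v‖ + ‖q - v‖) := by simp [mul_add]

lemma two_mul_w (S : Finset (Fin d → ℝ)) : 2 * w S = ∑ p ∈ S, ∑ q ∈ S, dist1 p q := by
  rw [w]; ring

lemma sum_dist1_le {S : Finset (Fin d → ℝ)} {p : Fin d → ℝ} (hp : p ∈ S) (v : Fin d → ℝ) :
    ∑ q ∈ S, dist1 p q ≤ d * ((#S - 2) * ‖p - v‖ + shellSum v S) := by
  calc ∑ q ∈ S, dist1 p q = ∑ q ∈ S.erase p, dist1 p q := (sum_erase _ (dist1_self p)).symm
    _ ≤ ∑ q ∈ S.erase p, d * (‖p - v‖ + ‖q - v‖) :=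
        sum_le_sum fun q _ => dist1_le_mul_add_norm p q v
    _ = ∑ q ∈ S, d * (‖p - v‖ + ‖q - v‖) - d * (‖p - v‖ + ‖p - v‖) := sum_erase_eq_sub hp
    _ = d * ((#S - 2) * ‖p - v‖ + shellSum v S) := by
        rw [← mul_sum, sum_add_distrib, sum_const, nsmul_eq_mul, shellSum]; ring

lemma w_le_mul_shellSum (v : Fin d → ℝ) (S : Finset (Fin d → ℝ)) :
    w S ≤ (#S - 1) * d * shellSum v S := by
  have h : 2 * w S ≤ ∑ p ∈ S, d * ((#S - 2) * ‖p - v‖ + shellSum v S) :=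
    two_mul_w S ▸ sum_le_sum fun p hp => sum_dist1_le hp v
  rw [← mul_sum, sum_add_distrib, ← mul_sum, sum_const, nsmul_eq_mul] at h
  rw [shellSum] at h ⊢
  linarith

lemma sum_shellSum_le (T : Finset (Fin d → ℝ)) : ∑ v ∈ T, shellSum v T ≤ 2 * w T := by
  calc ∑ v ∈ T, shellSum v T ≤ ∑ v ∈ T, ∑ s ∈ T, dist1 s v :=
        sum_le_sum fun v _ => sum_le_sum fun s _ => norm_sub_le_dist1 s v
    _ = 2 * w T := by rw [sum_comm, two_mul_w]

lemma exists_card_mul_shellSum_le {T : Finset (Fin d → ℝ)} (hT : T.Nonempty) :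
    ∃ v ∈ T, #T * shellSum v T ≤ 2 * w T :=
  exists_le_of_sum_le hT <| by
    rw [← mul_sum, sum_const, nsmul_eq_mul]
    exact mul_le_mul_of_nonneg_left (sum_shellSum_le T) (Nat.cast_nonneg _)

end

theorem mc1x1_approximation_general
    (d : ℕ)
    (P : Finset (Fin d → ℝ)) (k : ℕ) (hk2 : 2 ≤ k)
    (OPT : ℝ)
    (hOPT : IsLeast {x : ℝ | ∃ T ⊆ P, T.card = k ∧ w T = x} OPT)
    (vstar : Fin d → ℝ)
    (Sstar : Finset (Fin d → ℝ)) (hScard : Sstar.card = k)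
    (hmin : ∀ v ∈ P, ∀ S ⊆ P, S.card = k → shellSum vstar Sstar ≤ shellSum v S) :
    w Sstar ≤ (2 - 2 / (k : ℝ)) * d * OPT := by
  obtain ⟨⟨T, hTP, hTcard, rfl⟩, -⟩ := hOPT
  have hk : (1 : ℝ) ≤ k := by exact_mod_cast one_le_two.trans hk2
  obtain ⟨v, hvT, hv⟩ := exists_card_mul_shellSum_le (T := T) (card_pos.mp (by omega))
  rw [hTcard] at hv
  have hcoef : 0 ≤ ((k : ℝ) - 1) * d := mul_nonneg (by linarith) (Nat.cast_nonneg d)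
  calc w Sstar ≤ (k - 1) * d * shellSum vstar Sstar := hScard ▸ w_le_mul_shellSum vstar Sstar
    _ ≤ (k - 1) * d * shellSum v T :=
        mul_le_mul_of_nonneg_left (hmin v (hTP hvT) T hTP hTcard) hcoef
    _ ≤ (k - 1) * d * (2 * w T / k) :=
        mul_le_mul_of_nonneg_left ((le_div_iff₀ (by linarith)).2 (by linarith)) hcoef
    _ = (2 - 2 / (k : ℝ)) * d * w T := by field_simp

/-- MC1x1 is a `(2 − 2/k)·d`-approximation on `d`-dimensional meshes: if `v* ∈ P` and a
`k`-subset `S* ⊆ P` together minimize the sum of shell numbers over all centers in `P`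
and all `k`-subsets of `P`, then `w(S*) ≤ (2 − 2/k)·d·OPT`. -/
theorem mc1x1_approximation
    (d : ℕ) (hd : 1 ≤ d)
    (P : Finset (Fin d → ℝ)) (k : ℕ) (hk2 : 2 ≤ k) (hkP : k ≤ P.card)
    (OPT : ℝ)
    (hOPT : IsLeast {x : ℝ | ∃ T ⊆ P, T.card = k ∧ w T = x} OPT)
    (vstar : Fin d → ℝ) (hv : vstar ∈ P)
    (Sstar : Finset (Fin d → ℝ)) (hS : Sstar ⊆ P) (hScard : Sstar.card = k)
    (hmin : ∀ v ∈ P, ∀ S ⊆ P, S.card = k → shellSum vstar Sstar ≤ shellSum v S) :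
    w Sstar ≤ (2 - 2 / (k : ℝ)) * d * OPT :=
  mc1x1_approximation_general d P k hk2 OPT hOPT vstar Sstar hScard hmin
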